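/- arXiv:2112.06380 — 2 statements merged into one kernel-verified Lean document; each statement's English description precedes it below -/
import Mathlib

section
/- For any scaling parameter 0 < φ < 1 and any two permutations π*, σ* of [n], the Kullback–Leibler divergence satisfies D_KL(M(φ, π*) ‖ M(φ, σ*)) ≤ 4(1 − φ)(−log φ)·‖v_{π*} − v_{σ*}‖². -/
open scoped Classical
open Finset

namespace Mallows

/-- Kendall-tau distance between two permutations of `Fin n`: the number of pairs of
elements whose relative order differs in the two permutations. -/
noncomputable def dKT {n : ℕ} (π σ : Equiv.Perm (Fin n)) : ℕ :=
  (Finset.univ.filter (fun p : Fin n × Fin n =>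
    p.1 < p.2 ∧ ¬((π.symm p.1 < π.symm p.2) ↔ (σ.symm p.1 < σ.symm p.2)))).card

/-- Probability mass function of the Mallows model `M(φ, π₀)`. -/
noncomputable def mallowsPMF {n : ℕ} (φ : ℝ) (π₀ π : Equiv.Perm (Fin n)) : ℝ :=
  φ ^ dKT π π₀ / ∑ σ : Equiv.Perm (Fin n), φ ^ dKT σ π₀

/-- Expectation of `f` under `M(φ, π₀)`. -/
noncomputable def mExp {n : ℕ} (φ : ℝ) (π₀ : Equiv.Perm (Fin n))
    (f : Equiv.Perm (Fin n) → ℝ) : ℝ :=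
  ∑ π : Equiv.Perm (Fin n), mallowsPMF φ π₀ π * f π

/-- Probability of the event `A` under `M(φ, π₀)`. -/
noncomputable def mProb {n : ℕ} (φ : ℝ) (π₀ : Equiv.Perm (Fin n))
    (A : Equiv.Perm (Fin n) → Prop) : ℝ :=
  ∑ π : Equiv.Perm (Fin n), if A π then mallowsPMF φ π₀ π else 0

/-- Total variation distance between two pmfs on permutations of `Fin n`. -/
noncomputable def tvDist {n : ℕ} (p q : Equiv.Perm (Fin n) → ℝ) : ℝ :=
  (∑ π : Equiv.Perm (Fin n), |p π - q π|) / 2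

/-- Kullback–Leibler divergence between two pmfs on permutations of `Fin n`. -/
noncomputable def klDiv {n : ℕ} (p q : Equiv.Perm (Fin n) → ℝ) : ℝ :=
  ∑ π : Equiv.Perm (Fin n), p π * Real.log (p π / q π)

/-- Position vector of a permutation: entry `i` is the position `π⁻¹ i` of element `i`. -/
noncomputable def posVec {n : ℕ} (π : Equiv.Perm (Fin n)) : EuclideanSpace ℝ (Fin n) :=
  WithLp.toLp 2 (fun i => ((π.symm i).1 : ℝ))

/-- Front adjustment vector of `π` with respect to `π̂`: entry `i` counts the elements `j`
with `π̂⁻¹ j < π̂⁻¹ i` and `π⁻¹ j > π⁻¹ i`. -/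
noncomputable def leftAdj {n : ℕ} (πh π : Equiv.Perm (Fin n)) : EuclideanSpace ℝ (Fin n) :=
  WithLp.toLp 2 (fun i => ((Finset.univ.filter (fun j : Fin n =>
    πh.symm j < πh.symm i ∧ π.symm i < π.symm j)).card : ℝ))

/-- Back adjustment vector of `π` with respect to `π̂`: entry `i` counts the elements `j`
with `π̂⁻¹ j > π̂⁻¹ i` and `π⁻¹ j < π⁻¹ i`. -/
noncomputable def rightAdj {n : ℕ} (πh π : Equiv.Perm (Fin n)) : EuclideanSpace ℝ (Fin n) :=
  WithLp.toLp 2 (fun i => ((Finset.univ.filter (fun j : Fin n =>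
    πh.symm i < πh.symm j ∧ π.symm j < π.symm i)).card : ℝ))

section Aux
variable {n : ℕ}

/-- discordance predicate -/
def Dp (π τ : Equiv.Perm (Fin n)) (a b : Fin n) : Prop :=
  ¬((π.symm a < π.symm b) ↔ (τ.symm a < τ.symm b))

lemma Dp_symm {π τ : Equiv.Perm (Fin n)} {a b : Fin n} (hab : a ≠ b) :
    Dp π τ a b ↔ Dp π τ b a := by
  have h1 : π.symm b < π.symm a ↔ ¬ (π.symm a < π.symm b) := by
    have hne : π.symm a ≠ π.symm b := fun h => hab (π.symm.injective h)
    constructor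
    · exact fun h h' => absurd h (asymm h')
    · exact fun h => (hne.lt_or_gt).resolve_left h
  have h2 : τ.symm b < τ.symm a ↔ ¬ (τ.symm a < τ.symm b) := by
    have hne : τ.symm a ≠ τ.symm b := fun h => hab (τ.symm.injective h)
    constructor
    · exact fun h h' => absurd h (asymm h')
    · exact fun h => (hne.lt_or_gt).resolve_left h
  unfold Dp
  rw [h1, h2]
  tauto

lemma Dp_irrefl (π τ : Equiv.Perm (Fin n)) (a : Fin n) : ¬ Dp π τ a a := by
  unfold Dp; simp

lemma dKT_eq_card (π τ : Equiv.Perm (Fin n)) :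
    dKT π τ = (Finset.univ.filter (fun p : Fin n × Fin n =>
      p.1 < p.2 ∧ Dp π τ p.1 p.2)).card := by
  unfold dKT
  congr 1
  ext p
  unfold Dp
  simp only [Finset.mem_filter]

/-- ordered-pair (doubled) version -/
noncomputable def D2 (π τ : Equiv.Perm (Fin n)) : ℕ :=
  (Finset.univ.filter (fun p : Fin n × Fin n => p.1 ≠ p.2 ∧ Dp π τ p.1 p.2)).card

lemma D2_eq_two_mul (π τ : Equiv.Perm (Fin n)) : D2 π τ = 2 * dKT π τ := by
  rw [D2, dKT_eq_card, Finset.card_filter, Finset.card_filter]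
  have key : ∀ p : Fin n × Fin n,
      (if p.1 ≠ p.2 ∧ Dp π τ p.1 p.2 then (1:ℕ) else 0)
      = (if p.1 < p.2 ∧ Dp π τ p.1 p.2 then (1:ℕ) else 0)
        + (if p.2 < p.1 ∧ Dp π τ p.1 p.2 then (1:ℕ) else 0) := by
    intro p
    rcases lt_trichotomy p.1 p.2 with h|h|h
    · have : p.1 ≠ p.2 := ne_of_lt h
      by_cases hd : Dp π τ p.1 p.2 <;> simp [h, hd, this, asymm h]
    · simp [h, lt_irrefl]
    · have : p.1 ≠ p.2 := (ne_of_lt h).symm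
      by_cases hd : Dp π τ p.1 p.2 <;> simp [h, hd, this, asymm h, not_lt_of_gt h]
  rw [Finset.sum_congr rfl (fun p _ => key p), Finset.sum_add_distrib]
  have swap : (∑ p : Fin n × Fin n, if p.2 < p.1 ∧ Dp π τ p.1 p.2 then (1:ℕ) else 0)
      = ∑ p : Fin n × Fin n, if p.1 < p.2 ∧ Dp π τ p.1 p.2 then (1:ℕ) else 0 := by
    rw [← Equiv.sum_comp (Equiv.prodComm (Fin n) (Fin n))]
    refine Finset.sum_congr rfl (fun p _ => ?_)
    simp only [Equiv.prodComm_apply, Prod.fst_swap, Prod.snd_swap]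
    exact if_congr (and_congr_right fun h => Dp_symm (Ne.symm (ne_of_lt h))) rfl rfl
  rw [swap]; ring

lemma D2_relabel (π π₀ σ₀ : Equiv.Perm (Fin n)) :
    D2 ((π₀.symm.trans σ₀).symm * π) π₀ = D2 π σ₀ := by
  set u : Equiv.Perm (Fin n) := π₀.symm.trans σ₀ with hu
  have hsymm : ∀ c, (u.symm * π).symm c = π.symm (u c) := by
    intro c; rfl
  have hpos : ∀ c, π₀.symm c = σ₀.symm (u c) := by
    intro c; simp [hu]
  rw [D2, D2, Finset.card_filter, Finset.card_filter]
  have step : ∀ p : Fin n × Fin n,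
      (if p.1 ≠ p.2 ∧ Dp (u.symm * π) π₀ p.1 p.2 then (1:ℕ) else 0)
      = (fun q : Fin n × Fin n => if q.1 ≠ q.2 ∧ Dp π σ₀ q.1 q.2 then (1:ℕ) else 0)
          (Equiv.prodCongr u u p) := by
    intro p
    simp only [Equiv.prodCongr_apply, Prod.map_fst, Prod.map_snd]
    refine if_congr (and_congr ?_ ?_) rfl rfl
    · exact ⟨fun h hh => h (u.injective hh), fun h hh => h (congrArg u hh)⟩
    · unfold Dp
      rw [hsymm, hsymm, hpos, hpos]
  exact (Finset.sum_congr rfl (fun p _ => step p)).trans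
    (Equiv.sum_comp (Equiv.prodCongr u u)
      (fun q : Fin n × Fin n => if q.1 ≠ q.2 ∧ Dp π σ₀ q.1 q.2 then (1:ℕ) else 0))

lemma dKT_relabel (π π₀ σ₀ : Equiv.Perm (Fin n)) :
    dKT ((π₀.symm.trans σ₀).symm * π) π₀ = dKT π σ₀ := by
  have := D2_relabel π π₀ σ₀
  rw [D2_eq_two_mul, D2_eq_two_mul] at this
  omega

lemma Z_eq (φ : ℝ) (π₀ σ₀ : Equiv.Perm (Fin n)) :
    (∑ σ : Equiv.Perm (Fin n), φ ^ dKT σ π₀) = ∑ σ : Equiv.Perm (Fin n), φ ^ dKT σ σ₀ := by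
  rw [← Equiv.sum_comp (Equiv.mulLeft (π₀.symm.trans σ₀).symm)
    (fun σ => φ ^ dKT σ π₀)]
  refine Finset.sum_congr rfl (fun σ _ => ?_)
  rw [Equiv.coe_mulLeft, dKT_relabel]

/-- integer-valued pair indicator -/
noncomputable def F (π₀ π : Equiv.Perm (Fin n)) (x y : Fin n) : ℤ :=
  if x ≠ y ∧ Dp π π₀ x y then 1 else 0

lemma F_nonneg (π₀ π : Equiv.Perm (Fin n)) (x y : Fin n) : 0 ≤ F π₀ π x y := by
  unfold F; split <;> norm_num

lemma F_le_one (π₀ π : Equiv.Perm (Fin n)) (x y : Fin n) : F π₀ π x y ≤ 1 := by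
  unfold F; split <;> norm_num

lemma F_symm (π₀ π : Equiv.Perm (Fin n)) (x y : Fin n) : F π₀ π x y = F π₀ π y x := by
  unfold F
  rcases eq_or_ne x y with h|h
  · simp [h]
  · refine if_congr (and_congr ?_ (Dp_symm h)) rfl rfl
    exact ⟨fun _ => h.symm, fun _ => h⟩

lemma F_diag (π₀ π : Equiv.Perm (Fin n)) (x : Fin n) : F π₀ π x x = 0 := by
  unfold F; simp

lemma D2_sum (π₀ π : Equiv.Perm (Fin n)) :
    (D2 π π₀ : ℤ) = ∑ x : Fin n, ∑ y : Fin n, F π₀ π x y := by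
  rw [D2, Finset.card_filter]
  push_cast
  rw [Fintype.sum_prod_type]
  rfl

lemma swap_mul_symm_apply (π : Equiv.Perm (Fin n)) (a b c : Fin n) :
    (Equiv.swap a b * π).symm c = π.symm (Equiv.swap a b c) := rfl

section Swap

variable {π₀ : Equiv.Perm (Fin n)} {a b : Fin n} (hpos : π₀.symm a < π₀.symm b)

/-- the "between" count -/
lemma btw_card_le :
    ((univ.filter fun x : Fin n => π₀.symm a < π₀.symm x ∧ π₀.symm x < π₀.symm b).card : ℕ)
      ≤ (π₀.symm b).1 - (π₀.symm a).1 - 1 := by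
  have h := Finset.card_le_card_of_injOn (fun x => π₀.symm x)
    (s := univ.filter fun x : Fin n => π₀.symm a < π₀.symm x ∧ π₀.symm x < π₀.symm b)
    (t := Finset.Ioo (π₀.symm a) (π₀.symm b))
    (by intro x hx
        rw [Finset.mem_coe, Finset.mem_filter] at hx
        rw [Finset.mem_coe, Finset.mem_Ioo]
        exact hx.2)
    (fun x _ y _ h => π₀.symm.injective h)
  rwa [Fin.card_Ioo] at h

include hpos

lemma hab_ne : a ≠ b := fun h => absurd (congrArg π₀.symm h) (ne_of_lt hpos)

/-- key pointwise bound for `x ∉ {a, b}` -/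
lemma delta_pt (π : Equiv.Perm (Fin n)) {x : Fin n} (hxa : x ≠ a) (hxb : x ≠ b) :
    F π₀ (Equiv.swap a b * π) x a + F π₀ (Equiv.swap a b * π) x b
      ≤ F π₀ π x a + F π₀ π x b
        + (if π₀.symm a < π₀.symm x ∧ π₀.symm x < π₀.symm b then 2 else 0) := by
  by_cases hbtw : π₀.symm a < π₀.symm x ∧ π₀.symm x < π₀.symm b
  · rw [if_pos hbtw]
    have := F_le_one π₀ (Equiv.swap a b * π) x a
    have := F_le_one π₀ (Equiv.swap a b * π) x b
    have := F_nonneg π₀ π x a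
    have := F_nonneg π₀ π x b
    linarith
  · rw [if_neg hbtw, add_zero]
    -- positions of x relative to a and b agree
    have hne := hab_ne (π₀ := π₀) hpos
    have hxa' : (π₀.symm x).1 ≠ (π₀.symm a).1 :=
      fun h => hxa (π₀.symm.injective (Fin.val_injective h))
    have hxb' : (π₀.symm x).1 ≠ (π₀.symm b).1 :=
      fun h => hxb (π₀.symm.injective (Fin.val_injective h))
    have hab' : (π₀.symm a).1 < (π₀.symm b).1 := hpos
    have hbtw' : ¬((π₀.symm a).1 < (π₀.symm x).1 ∧ (π₀.symm x).1 < (π₀.symm b).1) := by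
      intro h
      exact hbtw ⟨h.1, h.2⟩
    have hiff : (π₀.symm x < π₀.symm a) ↔ (π₀.symm x < π₀.symm b) := by
      rw [Fin.lt_def, Fin.lt_def]
      omega
    have e1 : (Equiv.swap a b * π).symm x = π.symm x := by
      rw [swap_mul_symm_apply, Equiv.swap_apply_of_ne_of_ne hxa hxb]
    have e2 : (Equiv.swap a b * π).symm a = π.symm b := by
      rw [swap_mul_symm_apply, Equiv.swap_apply_left]
    have e3 : (Equiv.swap a b * π).symm b = π.symm a := by
      rw [swap_mul_symm_apply, Equiv.swap_apply_right]
    have hc1 : (x ≠ a ∧ Dp (Equiv.swap a b * π) π₀ x a) ↔ (x ≠ b ∧ Dp π π₀ x b) := by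
      unfold Dp
      rw [e1, e2, hiff]
      exact and_congr ⟨fun _ => hxb, fun _ => hxa⟩ Iff.rfl
    have hc2 : (x ≠ b ∧ Dp (Equiv.swap a b * π) π₀ x b) ↔ (x ≠ a ∧ Dp π π₀ x a) := by
      unfold Dp
      rw [e1, e3, ← hiff]
      exact and_congr ⟨fun _ => hxa, fun _ => hxb⟩ Iff.rfl
    have k1 : F π₀ (Equiv.swap a b * π) x a = F π₀ π x b := by
      unfold F; exact if_congr hc1 rfl rfl
    have k2 : F π₀ (Equiv.swap a b * π) x b = F π₀ π x a := by
      unfold F; exact if_congr hc2 rfl rfl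
    rw [k1, k2]
    linarith

omit hpos in
/-- unchanged for pairs away from a, b -/
lemma delta_zero (π : Equiv.Perm (Fin n)) {x y : Fin n}
    (hxa : x ≠ a) (hxb : x ≠ b) (hya : y ≠ a) (hyb : y ≠ b) :
    F π₀ (Equiv.swap a b * π) x y = F π₀ π x y := by
  unfold F Dp
  rw [swap_mul_symm_apply, swap_mul_symm_apply,
    Equiv.swap_apply_of_ne_of_ne hxa hxb, Equiv.swap_apply_of_ne_of_ne hya hyb]

lemma D2_swap_le (π : Equiv.Perm (Fin n)) :
    (D2 (Equiv.swap a b * π) π₀ : ℤ)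
      ≤ D2 π π₀ + 2 * (2 * ((π₀.symm b).1 - (π₀.symm a).1) - 1 : ℕ) := by
  classical
  have hab := hab_ne (π₀ := π₀) hpos
  set π' := Equiv.swap a b * π with hπ'
  set δ : Fin n → Fin n → ℤ := fun x y => F π₀ π' x y - F π₀ π x y with hδ
  set s : Finset (Fin n) := {a, b} with hs
  set bnd : Fin n → ℤ :=
    fun x => if π₀.symm a < π₀.symm x ∧ π₀.symm x < π₀.symm b then 2 else 0 with hbnd
  set kk : ℕ :=
    (univ.filter fun x : Fin n => π₀.symm a < π₀.symm x ∧ π₀.symm x < π₀.symm b).card with hkk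
  have hmem : ∀ x : Fin n, x ∉ s → x ≠ a ∧ x ≠ b := by
    intro x hx
    simp only [hs, Finset.mem_insert, Finset.mem_singleton] at hx
    exact ⟨fun h => hx (Or.inl h), fun h => hx (Or.inr h)⟩
  have hsum_bnd : ∑ x : Fin n, bnd x = 2 * (kk : ℤ) := by
    rw [hkk]
    push_cast [Finset.card_filter]
    rw [Finset.mul_sum]
    refine Finset.sum_congr rfl (fun x _ => ?_)
    simp only [hbnd]
    split <;> norm_num
  have hbnd_nonneg : ∀ x : Fin n, 0 ≤ bnd x := by
    intro x; simp only [hbnd]; split <;> norm_num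
  -- the partial-row bound
  have hrow : ∀ x ∈ sᶜ, δ x a + δ x b ≤ bnd x := by
    intro x hx
    obtain ⟨hxa, hxb⟩ := hmem x (Finset.mem_compl.mp hx)
    have h := delta_pt hpos π hxa hxb
    simp only [hδ, hbnd]
    linarith
  have hrowsum : ∑ x ∈ sᶜ, (δ x a + δ x b) ≤ 2 * (kk : ℤ) := by
    calc ∑ x ∈ sᶜ, (δ x a + δ x b) ≤ ∑ x ∈ sᶜ, bnd x := Finset.sum_le_sum hrow
      _ ≤ ∑ x : Fin n, bnd x :=
          Finset.sum_le_sum_of_subset_of_nonneg (Finset.subset_univ _)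
            (fun x _ _ => hbnd_nonneg x)
      _ = 2 * (kk : ℤ) := hsum_bnd
  have total : (D2 π' π₀ : ℤ) - (D2 π π₀ : ℤ) = ∑ x : Fin n, ∑ y : Fin n, δ x y := by
    rw [D2_sum, D2_sum, ← Finset.sum_sub_distrib]
    exact Finset.sum_congr rfl (fun x _ => (Finset.sum_sub_distrib _ _).symm)
  have split1 : ∑ x : Fin n, ∑ y : Fin n, δ x y
      = (∑ x : Fin n, ∑ y ∈ s, δ x y) + ∑ x : Fin n, ∑ y ∈ sᶜ, δ x y := by
    rw [← Finset.sum_add_distrib]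
    exact Finset.sum_congr rfl (fun x _ => (Finset.sum_add_sum_compl s _).symm)
  -- block B
  have hB : ∑ x : Fin n, ∑ y ∈ sᶜ, δ x y ≤ 2 * (kk : ℤ) := by
    rw [Finset.sum_comm]
    have : ∀ y ∈ sᶜ, ∑ x : Fin n, δ x y = δ a y + δ b y := by
      intro y hy
      obtain ⟨hya, hyb⟩ := hmem y (Finset.mem_compl.mp hy)
      rw [← Finset.sum_add_sum_compl s]
      have h1 : ∑ x ∈ s, δ x y = δ a y + δ b y := Finset.sum_pair hab
      have h2 : ∑ x ∈ sᶜ, δ x y = 0 := by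
        refine Finset.sum_eq_zero (fun x hx => ?_)
        obtain ⟨hxa, hxb⟩ := hmem x (Finset.mem_compl.mp hx)
        simp only [hδ]
        rw [delta_zero π hxa hxb hya hyb]
        ring
      rw [h1, h2, add_zero]
    rw [Finset.sum_congr rfl this]
    calc ∑ y ∈ sᶜ, (δ a y + δ b y) = ∑ y ∈ sᶜ, (δ y a + δ y b) := by
          refine Finset.sum_congr rfl (fun y _ => ?_)
          simp only [hδ]
          rw [F_symm π₀ π' a y, F_symm π₀ π a y, F_symm π₀ π' b y, F_symm π₀ π b y]
      _ ≤ 2 * (kk : ℤ) := hrowsum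
  -- block A
  have hA : ∑ x : Fin n, ∑ y ∈ s, δ x y ≤ 2 * (kk : ℤ) + 2 := by
    have hin : ∀ x : Fin n, ∑ y ∈ s, δ x y = δ x a + δ x b :=
      fun x => Finset.sum_pair hab
    rw [Finset.sum_congr rfl (fun x _ => hin x), ← Finset.sum_add_sum_compl s]
    have h1 : ∑ x ∈ s, (δ x a + δ x b) ≤ 2 := by
      rw [Finset.sum_pair hab]
      have d1 : δ a a = 0 := by simp only [hδ]; rw [F_diag, F_diag]; ring
      have d2 : δ b b = 0 := by simp only [hδ]; rw [F_diag, F_diag]; ring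
      have d3 : δ a b ≤ 1 := by
        simp only [hδ]
        have := F_le_one π₀ π' a b
        have := F_nonneg π₀ π a b
        linarith
      have d4 : δ b a ≤ 1 := by
        simp only [hδ]
        have := F_le_one π₀ π' b a
        have := F_nonneg π₀ π b a
        linarith
      linarith
    linarith [hrowsum]
  have hkkle := btw_card_le (π₀ := π₀) (a := a) (b := b)
  have hK : (π₀.symm a).1 < (π₀.symm b).1 := hpos
  rw [← hkk] at hkkle
  omega

lemma dKT_swap_le (π : Equiv.Perm (Fin n)) :
    dKT (Equiv.swap a b * π) π₀ ≤ dKT π π₀ + (2 * ((π₀.symm b).1 - (π₀.symm a).1) - 1) := by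
  have h := D2_swap_le hpos π
  rw [D2_eq_two_mul, D2_eq_two_mul] at h
  omega

end Swap

lemma one_sub_pow_le' (x : ℝ) (m : ℕ) (h0 : 0 ≤ x) (h1 : x ≤ 1) : 1 - x^m ≤ m * (1-x) := by
  induction m with
  | zero => simp
  | succ k ih =>
    have h2 := mul_le_mul_of_nonneg_left ih h0
    have h3 : x * (↑k * (1-x)) ≤ ↑k * (1-x) :=
      mul_le_of_le_one_left (mul_nonneg (Nat.cast_nonneg k) (by linarith)) h1
    have e : 1 - x^(k+1) = (1-x) + x*(1-x^k) := by rw [pow_succ]; ring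
    push_cast
    linarith

section Prob
variable {φ : ℝ} (hφ0 : 0 < φ) (hφ1 : φ < 1)

include hφ0 in
lemma Z_pos (π₀ : Equiv.Perm (Fin n)) :
    0 < ∑ σ : Equiv.Perm (Fin n), φ ^ dKT σ π₀ :=
  Finset.sum_pos (fun σ _ => pow_pos hφ0 _) Finset.univ_nonempty

include hφ0 in
lemma pmf_sum_one (π₀ : Equiv.Perm (Fin n)) :
    ∑ π : Equiv.Perm (Fin n), mallowsPMF φ π₀ π = 1 := by
  unfold mallowsPMF
  rw [← Finset.sum_div]
  exact div_self (ne_of_gt (Z_pos hφ0 π₀))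

include hφ0 in
lemma pmf_nonneg (π₀ π : Equiv.Perm (Fin n)) : 0 ≤ mallowsPMF φ π₀ π :=
  le_of_lt (div_pos (pow_pos hφ0 _) (Z_pos hφ0 π₀))

lemma Dp_swap (π π₀ : Equiv.Perm (Fin n)) {a b : Fin n} (hab : a ≠ b) :
    Dp (Equiv.swap a b * π) π₀ a b ↔ ¬ Dp π π₀ a b := by
  unfold Dp
  have e2 : (Equiv.swap a b * π).symm a = π.symm b := by
    rw [swap_mul_symm_apply, Equiv.swap_apply_left]
  have e3 : (Equiv.swap a b * π).symm b = π.symm a := by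
    rw [swap_mul_symm_apply, Equiv.swap_apply_right]
  rw [e2, e3]
  have hne : π.symm a ≠ π.symm b := fun h => hab (π.symm.injective h)
  have h1 : π.symm b < π.symm a ↔ ¬ (π.symm a < π.symm b) :=
    ⟨fun h h' => absurd h (asymm h'), fun h => (hne.lt_or_gt).resolve_left h⟩
  rw [h1]
  tauto

set_option maxHeartbeats 1600000 in
include hφ0 hφ1 in
lemma pair_bound (π₀ : Equiv.Perm (Fin n)) {a b : Fin n}
    (hpos : π₀.symm a < π₀.symm b) :
    1 - 2 * (∑ π : Equiv.Perm (Fin n), if Dp π π₀ a b then mallowsPMF φ π₀ π else 0)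
      ≤ ((2 * ((π₀.symm b).1 - (π₀.symm a).1) - 1 : ℕ) : ℝ) * (1 - φ) := by
  classical
  have hab := hab_ne (π₀ := π₀) hpos
  set m : ℕ := 2 * ((π₀.symm b).1 - (π₀.symm a).1) - 1 with hm
  set Z : ℝ := ∑ σ : Equiv.Perm (Fin n), φ ^ dKT σ π₀ with hZ
  have hZpos : 0 < Z := Z_pos hφ0 π₀
  set B : Finset (Equiv.Perm (Fin n)) := univ.filter (fun π => Dp π π₀ a b) with hB
  set A : Finset (Equiv.Perm (Fin n)) := univ.filter (fun π => ¬ Dp π π₀ a b) with hA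
  set S1 : ℝ := ∑ π ∈ B, φ ^ dKT π π₀ with hS1
  set S0 : ℝ := ∑ π ∈ A, φ ^ dKT π π₀ with hS0
  have hsplit : S1 + S0 = Z := by
    rw [hS1, hS0, hZ, hB, hA]
    exact Finset.sum_filter_add_sum_filter_not _ _ _
  have hS0nonneg : 0 ≤ S0 := Finset.sum_nonneg (fun π _ => le_of_lt (pow_pos hφ0 _))
  have hS1nonneg : 0 ≤ S1 := Finset.sum_nonneg (fun π _ => le_of_lt (pow_pos hφ0 _))
  -- injection step
  have key : φ ^ m * S0 ≤ S1 := by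
    have step1 : φ ^ m * S0 ≤ ∑ π ∈ A, φ ^ dKT (Equiv.swap a b * π) π₀ := by
      rw [hS0, Finset.mul_sum]
      refine Finset.sum_le_sum (fun π _ => ?_)
      rw [← pow_add]
      exact pow_le_pow_of_le_one (le_of_lt hφ0) (le_of_lt hφ1)
        (by rw [add_comm]; exact dKT_swap_le hpos π)
    have hinj : Set.InjOn (fun π => Equiv.swap a b * π) A :=
      fun x _ y _ h => mul_left_cancel h
    have step2 : ∑ π ∈ A, φ ^ dKT (Equiv.swap a b * π) π₀
        = ∑ π' ∈ A.image (fun π => Equiv.swap a b * π), φ ^ dKT π' π₀ :=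
      (Finset.sum_image (f := fun π' => φ ^ dKT π' π₀)
        (g := fun π => Equiv.swap a b * π) (fun x hx y hy h => hinj hx hy h)).symm
    have step3 : A.image (fun π => Equiv.swap a b * π) ⊆ B := by
      intro π' hπ'
      rw [Finset.mem_image] at hπ'
      obtain ⟨π, hπ, rfl⟩ := hπ'
      rw [hB, Finset.mem_filter]
      refine ⟨Finset.mem_univ _, ?_⟩
      rw [Dp_swap π π₀ hab]
      rw [hA, Finset.mem_filter] at hπ
      exact hπ.2
    calc φ ^ m * S0 ≤ ∑ π ∈ A, φ ^ dKT (Equiv.swap a b * π) π₀ := step1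
      _ = ∑ π' ∈ A.image (fun π => Equiv.swap a b * π), φ ^ dKT π' π₀ := step2
      _ ≤ S1 := Finset.sum_le_sum_of_subset_of_nonneg step3
          (fun π _ _ => le_of_lt (pow_pos hφ0 _))
  -- h = S1 / Z
  have hh : (∑ π : Equiv.Perm (Fin n), if Dp π π₀ a b then mallowsPMF φ π₀ π else 0)
      = S1 / Z := by
    rw [hS1, Finset.sum_div, hB, Finset.sum_filter]
    refine Finset.sum_congr rfl (fun π _ => ?_)
    unfold mallowsPMF
    rw [← hZ]
  rw [hh]
  have ht0 : 0 < φ ^ m := pow_pos hφ0 m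
  have ht1 : φ ^ m ≤ 1 := pow_le_one₀ (le_of_lt hφ0) (le_of_lt hφ1)
  have hone : (1:ℝ) - φ ^ m ≤ (m:ℝ) * (1 - φ) :=
    one_sub_pow_le' φ m (le_of_lt hφ0) (le_of_lt hφ1)
  have hnum : Z - 2 * S1 ≤ ((m:ℝ) * (1 - φ)) * Z := by
    have c1 : Z - 2 * S1 ≤ (1 - φ ^ m) * S0 := by nlinarith
    have c2 : (1 - φ ^ m) * S0 ≤ (1 - φ ^ m) * Z := by nlinarith
    have c3 : (1 - φ ^ m) * Z ≤ ((m:ℝ) * (1 - φ)) * Z := by nlinarith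
    linarith
  have heq : 1 - 2 * (S1 / Z) = (Z - 2 * S1) / Z := by
    field_simp
  rw [heq, div_le_iff₀ hZpos]
  exact hnum

end Prob

section Comb
variable (π₀ σ₀ : Equiv.Perm (Fin n))

/-- real position -/
noncomputable def xr (τ : Equiv.Perm (Fin n)) (i : Fin n) : ℝ := ((τ.symm i).1 : ℝ)

/-- signed comparison indicator -/
noncomputable def er (i j : Fin n) : ℝ :=
  (if π₀.symm j < π₀.symm i then (1:ℝ) else 0) - (if σ₀.symm j < σ₀.symm i then (1:ℝ) else 0)

/-- weight of a discordant pair -/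
noncomputable def Gw (i j : Fin n) : ℝ :=
  if Dp π₀ σ₀ i j then |xr π₀ i - xr π₀ j| + |xr σ₀ i - xr σ₀ j| else 0

lemma count_lt (τ : Equiv.Perm (Fin n)) (c : Fin n) :
    ∑ j : Fin n, (if τ.symm j < τ.symm c then (1:ℝ) else 0) = xr τ c := by
  rw [Finset.sum_boole]
  unfold xr
  congr 1
  have : (univ.filter fun j : Fin n => τ.symm j < τ.symm c).card
      = (Finset.Iio (τ.symm c)).card := by
    refine Finset.card_bij (fun j _ => τ.symm j) ?_ ?_ ?_
    · intro j hj
      rw [Finset.mem_filter] at hj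
      rw [Finset.mem_Iio]
      exact hj.2
    · intro j₁ h₁ j₂ h₂ h
      exact τ.symm.injective h
    · intro v hv
      rw [Finset.mem_Iio] at hv
      refine ⟨τ v, ?_, by simp⟩
      rw [Finset.mem_filter]
      simpa using hv
  rw [this, Fin.card_Iio]

lemma er_row (i : Fin n) : ∑ j : Fin n, er π₀ σ₀ i j = xr π₀ i - xr σ₀ i := by
  unfold er
  rw [Finset.sum_sub_distrib, count_lt, count_lt]

lemma er_antisymm (i j : Fin n) : er π₀ σ₀ j i = - er π₀ σ₀ i j := by
  unfold er
  rcases eq_or_ne i j with h|h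
  · simp [h]
  · have h1 : π₀.symm j ≠ π₀.symm i := fun hh => h.symm (π₀.symm.injective hh)
    have h2 : σ₀.symm j ≠ σ₀.symm i := fun hh => h.symm (σ₀.symm.injective hh)
    rcases h1.lt_or_gt with hh|hh <;> rcases h2.lt_or_gt with gg|gg <;>
      simp [hh, gg, asymm hh, asymm gg]

lemma er_mul (i j : Fin n) :
    ((xr π₀ i - xr σ₀ i) - (xr π₀ j - xr σ₀ j)) * er π₀ σ₀ i j = Gw π₀ σ₀ i j := by
  rcases eq_or_ne i j with h|h
  · subst h
    unfold er Gw
    simp [Dp_irrefl]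
  · have h1 : π₀.symm j ≠ π₀.symm i := fun hh => h.symm (π₀.symm.injective hh)
    have h2 : σ₀.symm j ≠ σ₀.symm i := fun hh => h.symm (σ₀.symm.injective hh)
    have hx : ∀ (τ : Equiv.Perm (Fin n)) (u v : Fin n),
        τ.symm u < τ.symm v → xr τ u < xr τ v := by
      intro τ u v hlt
      unfold xr
      exact_mod_cast hlt
    rcases h1.lt_or_gt with hh|hh <;> rcases h2.lt_or_gt with gg|gg
    · -- π: j < i, σ: j < i : concordant
      have hd : ¬ Dp π₀ σ₀ i j := by
        unfold Dp
        push_neg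
        exact ⟨fun hlt => absurd hlt (asymm hh), fun hlt => absurd hlt (asymm gg)⟩
      unfold er Gw
      simp [hh, gg, hd]
    · -- π: j < i, σ: i < j : discordant, er = 1
      have hd : Dp π₀ σ₀ i j := by
        unfold Dp
        intro hiff
        exact absurd (hiff.mpr gg) (asymm hh)
      have hx1 := hx π₀ j i hh
      have hx2 := hx σ₀ i j gg
      unfold er Gw
      rw [if_pos hd, if_pos hh, if_neg (asymm gg),
        abs_of_pos (by linarith : (0:ℝ) < xr π₀ i - xr π₀ j),
        abs_of_neg (by linarith : xr σ₀ i - xr σ₀ j < 0)]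
      ring
    · -- π: i < j, σ: j < i : discordant, er = -1
      have hd : Dp π₀ σ₀ i j := by
        unfold Dp
        intro hiff
        exact absurd (hiff.mp hh) (asymm gg)
      have hx1 := hx π₀ i j hh
      have hx2 := hx σ₀ j i gg
      unfold er Gw
      rw [if_pos hd, if_neg (asymm hh), if_pos gg,
        abs_of_neg (by linarith : xr π₀ i - xr π₀ j < 0),
        abs_of_pos (by linarith : (0:ℝ) < xr σ₀ i - xr σ₀ j)]
      ring
    · -- both i < j : concordant
      have hd : ¬ Dp π₀ σ₀ i j := by
        unfold Dp
        push_neg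
        exact ⟨fun _ => gg, fun _ => hh⟩
      unfold er Gw
      simp [hd, asymm hh, asymm gg]

lemma Gw_total :
    ∑ i : Fin n, ∑ j : Fin n, Gw π₀ σ₀ i j
      = 2 * ∑ i : Fin n, (xr π₀ i - xr σ₀ i)^2 := by
  have step : ∀ i j : Fin n, Gw π₀ σ₀ i j
      = ((xr π₀ i - xr σ₀ i) - (xr π₀ j - xr σ₀ j)) * er π₀ σ₀ i j :=
    fun i j => (er_mul π₀ σ₀ i j).symm
  calc ∑ i : Fin n, ∑ j : Fin n, Gw π₀ σ₀ i j
      = ∑ i : Fin n, ∑ j : Fin n,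
          ((xr π₀ i - xr σ₀ i) * er π₀ σ₀ i j - (xr π₀ j - xr σ₀ j) * er π₀ σ₀ i j) := by
        refine Finset.sum_congr rfl fun i _ => Finset.sum_congr rfl fun j _ => ?_
        rw [step i j]; ring
    _ = (∑ i : Fin n, ∑ j : Fin n, (xr π₀ i - xr σ₀ i) * er π₀ σ₀ i j)
        - ∑ i : Fin n, ∑ j : Fin n, (xr π₀ j - xr σ₀ j) * er π₀ σ₀ i j := by
        rw [← Finset.sum_sub_distrib]
        exact Finset.sum_congr rfl fun i _ => Finset.sum_sub_distrib _ _
    _ = 2 * ∑ i : Fin n, (xr π₀ i - xr σ₀ i)^2 := by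
        have t1 : (∑ i : Fin n, ∑ j : Fin n, (xr π₀ i - xr σ₀ i) * er π₀ σ₀ i j)
            = ∑ i : Fin n, (xr π₀ i - xr σ₀ i)^2 := by
          refine Finset.sum_congr rfl fun i _ => ?_
          rw [← Finset.mul_sum, er_row]
          ring
        have t2 : (∑ i : Fin n, ∑ j : Fin n, (xr π₀ j - xr σ₀ j) * er π₀ σ₀ i j)
            = - ∑ i : Fin n, (xr π₀ i - xr σ₀ i)^2 := by
          rw [Finset.sum_comm]
          have inner : ∀ j : Fin n, ∑ i : Fin n, (xr π₀ j - xr σ₀ j) * er π₀ σ₀ i j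
              = -((xr π₀ j - xr σ₀ j)^2) := by
            intro j
            have hpt : ∀ i : Fin n, (xr π₀ j - xr σ₀ j) * er π₀ σ₀ i j
                = -((xr π₀ j - xr σ₀ j) * er π₀ σ₀ j i) := by
              intro i
              rw [er_antisymm π₀ σ₀ j i]
              ring
            calc ∑ i : Fin n, (xr π₀ j - xr σ₀ j) * er π₀ σ₀ i j
                = ∑ i : Fin n, -((xr π₀ j - xr σ₀ j) * er π₀ σ₀ j i) :=
                  Finset.sum_congr rfl fun i _ => hpt i
              _ = -((xr π₀ j - xr σ₀ j) * ∑ i : Fin n, er π₀ σ₀ j i) := by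
                  rw [Finset.sum_neg_distrib, ← Finset.mul_sum]
              _ = -((xr π₀ j - xr σ₀ j)^2) := by rw [er_row]; ring
          calc ∑ j : Fin n, ∑ i : Fin n, (xr π₀ j - xr σ₀ j) * er π₀ σ₀ i j
              = ∑ j : Fin n, -((xr π₀ j - xr σ₀ j)^2) :=
                Finset.sum_congr rfl fun j _ => inner j
            _ = - ∑ i : Fin n, (xr π₀ i - xr σ₀ i)^2 := Finset.sum_neg_distrib _
        rw [t1, t2]
        ring

lemma Gw_symm (i j : Fin n) : Gw π₀ σ₀ i j = Gw π₀ σ₀ j i := by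
  unfold Gw
  rcases eq_or_ne i j with h|h
  · simp [h]
  · refine if_congr (Dp_symm h) ?_ rfl
    rw [abs_sub_comm, abs_sub_comm (xr σ₀ i)]

lemma Gw_half :
    ∑ p : Fin n × Fin n, (if p.1 < p.2 then Gw π₀ σ₀ p.1 p.2 else 0)
      = ∑ i : Fin n, (xr π₀ i - xr σ₀ i)^2 := by
  have key : ∀ p : Fin n × Fin n, Gw π₀ σ₀ p.1 p.2
      = (if p.1 < p.2 then Gw π₀ σ₀ p.1 p.2 else 0)
        + (if p.2 < p.1 then Gw π₀ σ₀ p.1 p.2 else 0) := by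
    intro p
    rcases lt_trichotomy p.1 p.2 with h|h|h
    · simp [h, asymm h]
    · simp only [h, lt_irrefl, if_neg (lt_irrefl p.2)]
      unfold Gw
      simp [h, Dp_irrefl]
    · simp [h, asymm h, not_lt_of_gt h]
  have swap : (∑ p : Fin n × Fin n, if p.2 < p.1 then Gw π₀ σ₀ p.1 p.2 else 0)
      = ∑ p : Fin n × Fin n, if p.1 < p.2 then Gw π₀ σ₀ p.1 p.2 else 0 := by
    rw [← Equiv.sum_comp (Equiv.prodComm (Fin n) (Fin n))
      (fun p : Fin n × Fin n => if p.2 < p.1 then Gw π₀ σ₀ p.1 p.2 else 0)]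
    refine Finset.sum_congr rfl (fun p _ => ?_)
    simp only [Equiv.prodComm_apply, Prod.fst_swap, Prod.snd_swap]
    rw [Gw_symm]
    exact if_congr Iff.rfl rfl rfl
  have total : ∑ p : Fin n × Fin n, Gw π₀ σ₀ p.1 p.2
      = 2 * ∑ i : Fin n, (xr π₀ i - xr σ₀ i)^2 := by
    rw [Fintype.sum_prod_type]
    exact Gw_total π₀ σ₀
  have split : ∑ p : Fin n × Fin n, Gw π₀ σ₀ p.1 p.2
      = (∑ p : Fin n × Fin n, if p.1 < p.2 then Gw π₀ σ₀ p.1 p.2 else 0)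
        + ∑ p : Fin n × Fin n, if p.2 < p.1 then Gw π₀ σ₀ p.1 p.2 else 0 := by
    rw [← Finset.sum_add_distrib]
    exact Finset.sum_congr rfl (fun p _ => key p)
  rw [swap] at split
  linarith

end Comb

section Main
variable {φ : ℝ} (hφ0 : 0 < φ) (hφ1 : φ < 1) (π₀ σ₀ : Equiv.Perm (Fin n))

lemma dKT_cast (π τ : Equiv.Perm (Fin n)) :
    (dKT π τ : ℝ)
      = ∑ p : Fin n × Fin n, (if p.1 < p.2 ∧ Dp π τ p.1 p.2 then (1:ℝ) else 0) := by
  rw [dKT_eq_card, Finset.card_filter]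
  push_cast
  rfl

include hφ0 hφ1 in
lemma T_bound (a b : Fin n) (hlt : a < b) :
    ∑ π : Equiv.Perm (Fin n), mallowsPMF φ π₀ π *
        ((if Dp π σ₀ a b then (1:ℝ) else 0) - (if Dp π π₀ a b then (1:ℝ) else 0))
      ≤ 2 * (1 - φ) * Gw π₀ σ₀ a b := by
  classical
  have hab : a ≠ b := ne_of_lt hlt
  by_cases hd : Dp π₀ σ₀ a b
  · -- discordant pair
    have hiff : ∀ π : Equiv.Perm (Fin n), Dp π σ₀ a b ↔ ¬ Dp π π₀ a b := by
      intro π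
      unfold Dp at hd ⊢
      tauto
    set h : ℝ := ∑ π : Equiv.Perm (Fin n), if Dp π π₀ a b then mallowsPMF φ π₀ π else 0
      with hh
    have hT : ∑ π : Equiv.Perm (Fin n), mallowsPMF φ π₀ π *
        ((if Dp π σ₀ a b then (1:ℝ) else 0) - (if Dp π π₀ a b then (1:ℝ) else 0))
        = 1 - 2 * h := by
      have hpt : ∀ π : Equiv.Perm (Fin n), mallowsPMF φ π₀ π *
          ((if Dp π σ₀ a b then (1:ℝ) else 0) - (if Dp π π₀ a b then (1:ℝ) else 0))
          = mallowsPMF φ π₀ π - 2 * (if Dp π π₀ a b then mallowsPMF φ π₀ π else 0) := by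
        intro π
        by_cases hc : Dp π π₀ a b
        · rw [if_pos hc, if_pos hc, if_neg (fun hx => ((hiff π).mp hx) hc)]
          ring
        · rw [if_neg hc, if_neg hc, if_pos ((hiff π).mpr hc)]
          ring
      rw [Finset.sum_congr rfl fun π _ => hpt π, Finset.sum_sub_distrib,
        pmf_sum_one hφ0, ← Finset.mul_sum, ← hh]
    rw [hT]
    -- relate h to the ordered-position pair bound
    have habs : ∀ (pa pb : Fin n), pa < pb →
        ((2 * ((pb).1 - (pa).1) - 1 : ℕ) : ℝ) ≤ 2 * |((pa).1:ℝ) - ((pb).1:ℝ)| := by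
      intro pa pb hpp
      have h1 : (pa).1 < (pb).1 := hpp
      have : |((pa).1:ℝ) - ((pb).1:ℝ)| = ((pb).1:ℝ) - ((pa).1:ℝ) := by
        rw [abs_sub_comm, abs_of_pos]
        have : ((pa).1:ℝ) < ((pb).1:ℝ) := by exact_mod_cast h1
        linarith
      rw [this]
      have h2 : (2 * ((pb).1 - (pa).1) - 1 : ℕ) = 2 * ((pb).1 - (pa).1) - 1 := rfl
      have h3 : ((2 * ((pb).1 - (pa).1) - 1 : ℕ) : ℝ)
          = 2 * (((pb).1 : ℝ) - ((pa).1 : ℝ)) - 1 := by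
        have hle : (pa).1 ≤ (pb).1 := le_of_lt h1
        have h4 : (1:ℕ) ≤ 2 * ((pb).1 - (pa).1) := by omega
        push_cast [Nat.cast_sub hle, Nat.cast_sub h4]
        ring
      rw [h3]
      linarith
    have hGw : Gw π₀ σ₀ a b = |xr π₀ a - xr π₀ b| + |xr σ₀ a - xr σ₀ b| := if_pos hd
    have habs2 : 0 ≤ |xr σ₀ a - xr σ₀ b| := abs_nonneg _
    have h1φ : (0:ℝ) ≤ 1 - φ := by linarith
    have hne : π₀.symm a ≠ π₀.symm b := fun hh => hab (π₀.symm.injective hh)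
    rcases hne.lt_or_gt with hpos|hpos
    · have hb := pair_bound hφ0 hφ1 π₀ hpos
      rw [← hh] at hb
      have hk := habs (π₀.symm a) (π₀.symm b) hpos
      calc 1 - 2 * h ≤ ((2 * ((π₀.symm b).1 - (π₀.symm a).1) - 1 : ℕ) : ℝ) * (1 - φ) := hb
        _ ≤ (2 * |xr π₀ a - xr π₀ b|) * (1 - φ) := by
            refine mul_le_mul_of_nonneg_right ?_ h1φ
            unfold xr
            exact hk
        _ ≤ 2 * (1 - φ) * Gw π₀ σ₀ a b := by
            rw [hGw]
            nlinarith [abs_nonneg (xr π₀ a - xr π₀ b)]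
    · have hb := pair_bound hφ0 hφ1 π₀ (a := b) (b := a) hpos
      have hsw : (∑ π : Equiv.Perm (Fin n), if Dp π π₀ b a then mallowsPMF φ π₀ π else 0)
          = h := by
        rw [hh]
        refine Finset.sum_congr rfl fun π _ => if_congr (Dp_symm hab.symm) rfl rfl
      rw [hsw] at hb
      have hk := habs (π₀.symm b) (π₀.symm a) hpos
      calc 1 - 2 * h ≤ ((2 * ((π₀.symm a).1 - (π₀.symm b).1) - 1 : ℕ) : ℝ) * (1 - φ) := hb
        _ ≤ (2 * |xr π₀ a - xr π₀ b|) * (1 - φ) := by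
            refine mul_le_mul_of_nonneg_right ?_ h1φ
            unfold xr
            rw [abs_sub_comm]
            exact hk
        _ ≤ 2 * (1 - φ) * Gw π₀ σ₀ a b := by
            rw [hGw]
            nlinarith [abs_nonneg (xr π₀ a - xr π₀ b)]
  · -- concordant pair : T = 0
    have hc : (π₀.symm a < π₀.symm b) ↔ (σ₀.symm a < σ₀.symm b) := not_not.mp hd
    have hpt : ∀ π : Equiv.Perm (Fin n), Dp π σ₀ a b ↔ Dp π π₀ a b := by
      intro π
      unfold Dp
      rw [← hc]
    have hz : ∑ π : Equiv.Perm (Fin n), mallowsPMF φ π₀ π *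
        ((if Dp π σ₀ a b then (1:ℝ) else 0) - (if Dp π π₀ a b then (1:ℝ) else 0)) = 0 := by
      refine Finset.sum_eq_zero fun π _ => ?_
      rw [if_congr (hpt π) rfl rfl]
      ring
    rw [hz]
    have : Gw π₀ σ₀ a b = 0 := if_neg hd
    rw [this]
    ring_nf
    exact le_refl 0

end Main
end Aux

/-- KL divergence upper bound. For `0 < φ < 1`,
`D_KL(M(φ, π₀) ‖ M(φ, σ₀)) ≤ 4 (1 - φ)(-log φ) ‖v_{π₀} - v_{σ₀}‖²`. -/
theorem kl_upper_bound (n : ℕ) (φ : ℝ) (hφ0 : 0 < φ) (hφ1 : φ < 1)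
    (π₀ σ₀ : Equiv.Perm (Fin n)) :
    klDiv (mallowsPMF φ π₀) (mallowsPMF φ σ₀) ≤
      4 * (1 - φ) * (-Real.log φ) * ‖posVec π₀ - posVec σ₀‖ ^ 2 := by
  classical
  have hlog : Real.log φ < 0 := Real.log_neg hφ0 hφ1
  have hmlog : (0:ℝ) ≤ -Real.log φ := by linarith
  have h1φ : (0:ℝ) ≤ 1 - φ := by linarith
  set N : ℝ := ∑ i : Fin n, (xr π₀ i - xr σ₀ i)^2 with hN
  have hNnonneg : 0 ≤ N := Finset.sum_nonneg fun i _ => sq_nonneg _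
  have hnorm : ‖posVec π₀ - posVec σ₀‖^2 = N := by
    rw [EuclideanSpace.norm_eq, Real.sq_sqrt (by positivity)]
    refine Finset.sum_congr rfl fun i _ => ?_
    have hi : (posVec π₀ - posVec σ₀) i = xr π₀ i - xr σ₀ i := by simp [posVec, xr]
    rw [hi, Real.norm_eq_abs, sq_abs]
  have hkl : klDiv (mallowsPMF φ π₀) (mallowsPMF φ σ₀)
      = (-Real.log φ) * ∑ π : Equiv.Perm (Fin n),
          mallowsPMF φ π₀ π * ((dKT π σ₀ : ℝ) - (dKT π π₀ : ℝ)) := by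
    unfold klDiv
    rw [Finset.mul_sum]
    refine Finset.sum_congr rfl fun π _ => ?_
    have hr : mallowsPMF φ π₀ π / mallowsPMF φ σ₀ π = φ ^ dKT π π₀ / φ ^ dKT π σ₀ := by
      unfold mallowsPMF
      rw [← Z_eq φ π₀ σ₀]
      have hZ : (∑ σ : Equiv.Perm (Fin n), φ ^ dKT σ π₀) ≠ 0 := ne_of_gt (Z_pos hφ0 π₀)
      have h2 : (φ : ℝ) ^ dKT π σ₀ ≠ 0 := pow_ne_zero _ (ne_of_gt hφ0)
      field_simp
    rw [hr, Real.log_div (pow_ne_zero _ (ne_of_gt hφ0)) (pow_ne_zero _ (ne_of_gt hφ0)),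
      Real.log_pow, Real.log_pow]
    ring
  have hΔ : (∑ π : Equiv.Perm (Fin n),
      mallowsPMF φ π₀ π * ((dKT π σ₀ : ℝ) - (dKT π π₀ : ℝ))) ≤ 2 * (1-φ) * N := by
    have hexp : ∀ π : Equiv.Perm (Fin n), ((dKT π σ₀ : ℝ) - (dKT π π₀ : ℝ))
        = ∑ p : Fin n × Fin n, ((if p.1 < p.2 ∧ Dp π σ₀ p.1 p.2 then (1:ℝ) else 0)
            - (if p.1 < p.2 ∧ Dp π π₀ p.1 p.2 then (1:ℝ) else 0)) := by
      intro π
      rw [dKT_cast, dKT_cast, Finset.sum_sub_distrib]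
    calc (∑ π : Equiv.Perm (Fin n),
        mallowsPMF φ π₀ π * ((dKT π σ₀ : ℝ) - (dKT π π₀ : ℝ)))
        = ∑ π : Equiv.Perm (Fin n), ∑ p : Fin n × Fin n,
            mallowsPMF φ π₀ π * ((if p.1 < p.2 ∧ Dp π σ₀ p.1 p.2 then (1:ℝ) else 0)
              - (if p.1 < p.2 ∧ Dp π π₀ p.1 p.2 then (1:ℝ) else 0)) := by
          refine Finset.sum_congr rfl fun π _ => ?_
          rw [hexp π, Finset.mul_sum]
      _ = ∑ p : Fin n × Fin n, ∑ π : Equiv.Perm (Fin n),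
            mallowsPMF φ π₀ π * ((if p.1 < p.2 ∧ Dp π σ₀ p.1 p.2 then (1:ℝ) else 0)
              - (if p.1 < p.2 ∧ Dp π π₀ p.1 p.2 then (1:ℝ) else 0)) := Finset.sum_comm
      _ ≤ ∑ p : Fin n × Fin n,
            (if p.1 < p.2 then 2 * (1-φ) * Gw π₀ σ₀ p.1 p.2 else 0) := by
          refine Finset.sum_le_sum fun p _ => ?_
          by_cases hplt : p.1 < p.2
          · rw [if_pos hplt]
            have hcongr : ∀ π : Equiv.Perm (Fin n),
                mallowsPMF φ π₀ π * ((if p.1 < p.2 ∧ Dp π σ₀ p.1 p.2 then (1:ℝ) else 0)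
                  - (if p.1 < p.2 ∧ Dp π π₀ p.1 p.2 then (1:ℝ) else 0))
                = mallowsPMF φ π₀ π * ((if Dp π σ₀ p.1 p.2 then (1:ℝ) else 0)
                  - (if Dp π π₀ p.1 p.2 then (1:ℝ) else 0)) := by
              intro π
              rw [if_congr (and_iff_right hplt) rfl rfl, if_congr (and_iff_right hplt) rfl rfl]
            rw [Finset.sum_congr rfl fun π _ => hcongr π]
            exact T_bound hφ0 hφ1 π₀ σ₀ p.1 p.2 hplt
          · rw [if_neg hplt]
            have : ∀ π : Equiv.Perm (Fin n),
                mallowsPMF φ π₀ π * ((if p.1 < p.2 ∧ Dp π σ₀ p.1 p.2 then (1:ℝ) else 0)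
                  - (if p.1 < p.2 ∧ Dp π π₀ p.1 p.2 then (1:ℝ) else 0)) = 0 := by
              intro π
              rw [if_neg (fun hx => hplt hx.1), if_neg (fun hx => hplt hx.1)]
              ring
            rw [Finset.sum_congr rfl fun π _ => this π, Finset.sum_const_zero]
      _ = 2 * (1-φ) * ∑ p : Fin n × Fin n,
            (if p.1 < p.2 then Gw π₀ σ₀ p.1 p.2 else 0) := by
          rw [Finset.mul_sum]
          refine Finset.sum_congr rfl fun p _ => ?_
          split <;> ring
      _ = 2 * (1-φ) * N := by rw [Gw_half]
  rw [hkl]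
  calc (-Real.log φ) * ∑ π : Equiv.Perm (Fin n),
        mallowsPMF φ π₀ π * ((dKT π σ₀ : ℝ) - (dKT π π₀ : ℝ))
      ≤ (-Real.log φ) * (2 * (1-φ) * N) := mul_le_mul_of_nonneg_left hΔ hmlog
    _ ≤ 4 * (1 - φ) * (-Real.log φ) * ‖posVec π₀ - posVec σ₀‖ ^ 2 := by
        rw [hnorm]
        nlinarith [mul_nonneg (mul_nonneg h1φ hmlog) hNnonneg]

end Mallows
end

section
/- There is a universal constant C such that the following holds. Let M(φ, id) be a Mallows model on n elements with 0 ≤ φ < 1, let t ≥ 2, and let k be a positive integer with k ≤ min(t, 1/(1 − φ)). Let τ be any permutation of {1, …, t} and let x, y ∈ {1, …, t} be consecutive in τ, i.e., τ^{-1}(y) = τ^{-1}(x) + 1. Then, conditioned on the event that the permutation induced by π on {1, …, t} equals τ, the conditional expectation over π ~ M(φ, id) of the number of elements of {t+1, …, t+k} lying strictly between x and y in the permutation induced by π on {1, …, t+k} (namely, π_{id:t+k}^{-1}(y) − π_{id:t+k}^{-1}(x) − 1) is at most C·k·max(1/t, 1 − φ). -/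
open scoped Classical
open Finset

namespace Mallows

/-- 0-indexed position of element `j` within the permutation induced by `π` on the first
`t` elements (those with value `< t`). -/
noncomputable def relPos {n : ℕ} (π : Equiv.Perm (Fin n)) (t : ℕ) (j : Fin n) : ℕ :=
  (Finset.univ.filter (fun i : Fin n => i.1 < t ∧ π.symm i < π.symm j)).card

/-- Conditional expectation of `f` given the event `A`, under `M(φ, π₀)`. -/
noncomputable def mCondExp {n : ℕ} (φ : ℝ) (π₀ : Equiv.Perm (Fin n))
    (f : Equiv.Perm (Fin n) → ℝ) (A : Equiv.Perm (Fin n) → Prop) : ℝ :=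
  (∑ π : Equiv.Perm (Fin n), if A π then mallowsPMF φ π₀ π * f π else 0) / mProb φ π₀ A

/-!
Under `M(φ, id)` the Lehmer code `c_i` (the number of smaller elements placed after `i`) is
independent of the other codes, with weight `φ ^ c_i` on `{0, …, i}`, and the codes below `i`
determine the relative order of the elements below `i`. So, given the order below `i`, the
element `i` falls strictly between `x` and `y` for only `1 + g` of its `i + 1` possible codes,
`g` being the number of elements currently between them; each code has conditional
probability at most `1 / ∑_{s < t} φ ^ s`. Hence the conditional expectation of `g + 1` grows
by a factor at most `1 + 1 / ∑_{s < t} φ ^ s` per inserted element. Finally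
`2 max(1/t, 1 - φ) ∑_{s < t} φ ^ s ≥ 1` (split on whether `φ ^ t ≤ 1/2`) and
`k max(1/t, 1 - φ) ≤ 1`, so after `k` insertions the growth is at most
`2 e² k max(1/t, 1 - φ)`.
-/

theorem sum_ite_pow_le {φ : ℝ} (hφ0 : 0 ≤ φ) (hφ1 : φ ≤ 1) (N a b : ℕ) :
    ∑ c : Fin N, (if a ≤ c.1 ∧ c.1 < b then φ ^ (c : ℕ) else 0) ≤ ((b - a : ℕ) : ℝ) := by
  rw [Fin.sum_univ_eq_sum_range (fun c => if a ≤ c ∧ c < b then φ ^ c else 0), ← sum_filter]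
  calc ∑ c ∈ (range N).filter (fun c => a ≤ c ∧ c < b), φ ^ c
      ≤ #((range N).filter (fun c => a ≤ c ∧ c < b)) • (1 : ℝ) :=
        sum_le_card_nsmul _ _ _ fun c _ => pow_le_one₀ hφ0 hφ1
    _ ≤ #(Ico a b) := by
        rw [nsmul_one]
        exact_mod_cast card_le_card fun c hc => by simp_all
    _ = ((b - a : ℕ) : ℝ) := by rw [Nat.card_Ico]

theorem one_le_two_mul_max_mul_geom_sum {φ : ℝ} (hφ0 : 0 ≤ φ) (hφ1 : φ ≤ 1) {t : ℕ}
    (ht : 0 < t) : 1 ≤ 2 * max (1 / (t : ℝ)) (1 - φ) * ∑ s ∈ range t, φ ^ s := by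
  have hZ : 0 ≤ ∑ s ∈ range t, φ ^ s := sum_nonneg fun _ _ => by positivity
  by_cases hsmall : φ ^ t ≤ 1 / 2
  · have := geom_sum_mul_neg φ t
    have := le_max_right (1 / (t : ℝ)) (1 - φ)
    nlinarith
  · have hlarge : t * φ ^ t ≤ ∑ s ∈ range t, φ ^ s := by
      simpa using card_nsmul_le_sum (range t) (φ ^ ·) (φ ^ t)
        fun s hs => pow_le_pow_of_le_one hφ0 hφ1 (mem_range.mp hs).le
    have := le_max_left (1 / (t : ℝ)) (1 - φ)
    have ht' : (0 : ℝ) < t := by exact_mod_cast ht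
    calc (1 : ℝ) ≤ 2 * (1 / t) * (t * φ ^ t) := by field_simp; linarith
      _ ≤ _ := by gcongr

theorem one_add_pow_sub_one_le {p : ℝ} (hp : 0 ≤ p) (k : ℕ) :
    (1 + p) ^ k - 1 ≤ k * p * Real.exp (k * p) := by
  have hpow : (1 + p) ^ k ≤ Real.exp (k * p) := by
    rw [Real.exp_nat_mul]
    exact pow_le_pow_left₀ (by positivity) (by linarith [Real.add_one_le_exp p]) k
  have hsum : ∑ i ∈ range k, (1 + p) ^ i ≤ k * (1 + p) ^ k := by
    simpa using sum_le_card_nsmul (range k) ((1 + p) ^ ·) ((1 + p) ^ k)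
      fun i hi => pow_le_pow_right₀ (by linarith) (mem_range.mp hi).le
  calc (1 + p) ^ k - 1 = (∑ i ∈ range k, (1 + p) ^ i) * p := by
        rw [← geom_sum_mul]; ring
    _ ≤ k * (1 + p) ^ k * p := by gcongr
    _ ≤ k * Real.exp (k * p) * p := by gcongr
    _ = k * p * Real.exp (k * p) := by ring

theorem one_add_inv_geom_sum_pow_sub_one_le {φ : ℝ} (hφ0 : 0 ≤ φ) (hφ1 : φ < 1) {t k : ℕ}
    (ht : 0 < t) (hkt : k ≤ t) (hkφ : (k : ℝ) ≤ 1 / (1 - φ)) :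
    (1 + (∑ s ∈ range t, φ ^ s)⁻¹) ^ k - 1 ≤ 2 * Real.exp 2 * k * max (1 / (t : ℝ)) (1 - φ) := by
  have hZμ := one_le_two_mul_max_mul_geom_sum hφ0 hφ1.le ht
  set μ := max (1 / (t : ℝ)) (1 - φ)
  set Z := ∑ s ∈ range t, φ ^ s
  have hZ : 0 < Z := pos_of_mul_pos_right (one_pos.trans_le hZμ) (by positivity)
  have hp : Z⁻¹ ≤ 2 * μ := by rw [inv_le_iff_one_le_mul₀ hZ]; linarith
  have hkμ : k * μ ≤ 1 := by
    have ht' : (0 : ℝ) < t := by exact_mod_cast ht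
    rw [mul_max_of_nonneg _ _ (Nat.cast_nonneg k)]
    refine max_le ?_ ?_
    · rw [mul_one_div, div_le_one ht']; exact_mod_cast hkt
    · rwa [← le_div_iff₀ (by linarith)]
  have hkp : k * Z⁻¹ ≤ 2 := by nlinarith [Nat.cast_nonneg (α := ℝ) k]
  calc (1 + Z⁻¹) ^ k - 1 ≤ k * Z⁻¹ * Real.exp (k * Z⁻¹) := one_add_pow_sub_one_le (by positivity) k
    _ ≤ k * (2 * μ) * Real.exp 2 := by gcongr
    _ = 2 * Real.exp 2 * k * μ := by ring

section Combinatorics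

variable {n : ℕ}

noncomputable def code (π : Equiv.Perm (Fin n)) (i : Fin n) : ℕ :=
  #{j | j < i ∧ π.symm i < π.symm j}

def SameOrderBelow (m : ℕ) (π σ : Equiv.Perm (Fin n)) : Prop :=
  ∀ p q : Fin n, p.1 < m → q.1 < m → (π.symm p < π.symm q ↔ σ.symm p < σ.symm q)

def Between (π : Equiv.Perm (Fin n)) (a b l : Fin n) : Prop :=
  π.symm a < π.symm l ∧ π.symm l < π.symm b

noncomputable def gap (π : Equiv.Perm (Fin n)) (m : ℕ) (a b : Fin n) : ℕ :=
  #{l | l.1 < m ∧ Between π a b l}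

theorem relPos_le_relPos {π : Equiv.Perm (Fin n)} {a b : Fin n} (m : ℕ)
    (h : π.symm a ≤ π.symm b) : relPos π m a ≤ relPos π m b :=
  card_le_card fun l hl => by
    simp only [mem_filter, mem_univ, true_and] at hl ⊢
    exact ⟨hl.1, hl.2.trans_le h⟩

theorem relPos_lt_relPos {π : Equiv.Perm (Fin n)} {a b : Fin n} {m : ℕ} (ha : a.1 < m)
    (h : π.symm a < π.symm b) : relPos π m a < relPos π m b := by
  refine card_lt_card ⟨fun l hl => ?_, fun hsub => ?_⟩
  · simp only [mem_filter, mem_univ, true_and] at hl ⊢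
    exact ⟨hl.1, hl.2.trans h⟩
  · have := @hsub a (by simp [ha, h])
    simp at this

theorem relPos_lt_relPos_iff {π : Equiv.Perm (Fin n)} {a b : Fin n} {m : ℕ} (ha : a.1 < m) :
    relPos π m a < relPos π m b ↔ π.symm a < π.symm b :=
  ⟨fun h => lt_of_not_ge fun h' => h.not_ge (relPos_le_relPos m h'), relPos_lt_relPos ha⟩

theorem symm_lt_symm_of_relPos_eq_add_one {π : Equiv.Perm (Fin n)} {x y : Fin n} {t : ℕ}
    (hx : x.1 < t) (h : relPos π t y = relPos π t x + 1) : π.symm x < π.symm y :=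
  (relPos_lt_relPos_iff hx).mp (by omega)

theorem symm_lt_symm_iff_relPos_le {π : Equiv.Perm (Fin n)} {a b : Fin n} {m : ℕ}
    (ha : ¬a.1 < m) (hb : b.1 < m) : π.symm a < π.symm b ↔ relPos π m a ≤ relPos π m b := by
  refine ⟨fun h => relPos_le_relPos m h.le, fun h => lt_of_not_ge fun h' => ?_⟩
  have hne : π.symm b ≠ π.symm a := fun he => ha (π.symm.injective he ▸ hb)
  exact h.not_gt (relPos_lt_relPos hb (h'.lt_of_ne hne))

theorem relPos_self_add_code (π : Equiv.Perm (Fin n)) (i : Fin n) :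
    relPos π i i + code π i = i := by
  have hsplit := card_filter_add_card_filter_not (s := {j : Fin n | j < i})
    (fun j => π.symm j < π.symm i)
  rw [filter_filter, filter_filter, filter_gt_eq_Iio, Fin.card_Iio] at hsplit
  convert hsplit using 2
  · rfl
  · unfold code
    congr 1
    ext j
    simp only [mem_filter, mem_univ, true_and, not_lt]
    refine and_congr_right fun hj => ⟨fun h => h.le, fun h => h.lt_of_ne ?_⟩
    exact π.symm.injective.ne hj.ne'

theorem symm_lt_symm_iff_not_lt (π : Equiv.Perm (Fin n)) {p q : Fin n} (hpq : p ≠ q) :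
    π.symm p < π.symm q ↔ ¬π.symm q < π.symm p :=
  ⟨fun h => lt_asymm h, fun h => (not_lt.mp h).lt_of_ne (π.symm.injective.ne hpq)⟩

/-- `π` inserts `i` at rank `i - code π i` among the smaller elements. -/
theorem symm_lt_symm_iff_le_relPos_add_code (π : Equiv.Perm (Fin n)) {i j : Fin n}
    (hj : j < i) : π.symm i < π.symm j ↔ i.1 ≤ relPos π i j + code π i := by
  rw [symm_lt_symm_iff_relPos_le (lt_irrefl _) hj]
  have := relPos_self_add_code π i
  omega

theorem between_iff_code (π : Equiv.Perm (Fin n)) {x y i : Fin n} (hx : x < i) (hy : y < i) :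
    Between π x y i ↔ i.1 ≤ relPos π i y + code π i ∧ relPos π i x + code π i < i := by
  rw [Between, symm_lt_symm_iff_not_lt π hx.ne, symm_lt_symm_iff_le_relPos_add_code π hx,
    symm_lt_symm_iff_le_relPos_add_code π hy, not_le, and_comm]

theorem SameOrderBelow.relPos_eq {m t : ℕ} {π σ : Equiv.Perm (Fin n)}
    (h : SameOrderBelow m π σ) (ht : t ≤ m) {j : Fin n} (hj : j.1 < m) :
    relPos π t j = relPos σ t j := by
  unfold relPos
  congr 1
  ext l
  simp only [mem_filter, mem_univ, true_and]
  exact and_congr_right fun hl => h l j (by omega) hj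

theorem SameOrderBelow.gap_eq {m : ℕ} {π σ : Equiv.Perm (Fin n)} (h : SameOrderBelow m π σ)
    {a b : Fin n} (ha : a.1 < m) (hb : b.1 < m) : gap π m a b = gap σ m a b := by
  unfold gap
  congr 1
  ext l
  simp only [mem_filter, mem_univ, true_and]
  exact and_congr_right fun hl => and_congr (h a l ha hl) (h l b hl hb)

theorem SameOrderBelow.mono {m m' : ℕ} {π σ : Equiv.Perm (Fin n)} (h : SameOrderBelow m π σ)
    (hm : m' ≤ m) : SameOrderBelow m' π σ :=
  fun p q hp hq => h p q (by omega) (by omega)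

theorem sameOrderBelow_of_code_eq {π σ : Equiv.Perm (Fin n)} {m : ℕ}
    (h : ∀ j : Fin n, j.1 < m → code π j = code σ j) : SameOrderBelow m π σ := by
  induction m with
  | zero => intro p q hp; omega
  | succ m ih =>
    have hlow := ih fun j hj => h j (by omega)
    have hnew : ∀ p q : Fin n, p.1 < m → q.1 = m →
        (π.symm q < π.symm p ↔ σ.symm q < σ.symm p) := by
      intro p q hp hq
      have hpq : p < q := by rw [Fin.lt_def]; omega
      rw [symm_lt_symm_iff_le_relPos_add_code π hpq, symm_lt_symm_iff_le_relPos_add_code σ hpq,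
        hlow.relPos_eq hq.le hp, h q (by omega)]
    intro p q hp hq
    rcases Nat.lt_or_ge p.1 m with hpm | hpm <;> rcases Nat.lt_or_ge q.1 m with hqm | hqm
    · exact hlow p q hpm hqm
    · have hpq : p ≠ q := Fin.ne_of_val_ne (by omega)
      rw [symm_lt_symm_iff_not_lt π hpq, symm_lt_symm_iff_not_lt σ hpq, hnew p q hpm (by omega)]
    · exact hnew q p hqm (by omega)
    · obtain rfl : p = q := Fin.ext (by omega)
      simp

theorem relPos_eq_symm_apply (π : Equiv.Perm (Fin n)) (j : Fin n) :
    relPos π n j = π.symm j := by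
  have : ({i | i.1 < n ∧ π.symm i < π.symm j} : Finset (Fin n)) =
      (Iio (π.symm j)).map π.toEmbedding := by
    ext i
    simp [mem_map_equiv]
  rw [relPos, this, card_map, Fin.card_Iio]

theorem SameOrderBelow.eq {π σ : Equiv.Perm (Fin n)} (h : SameOrderBelow n π σ) : π = σ := by
  refine Equiv.symm_bijective.injective (Equiv.ext fun j => Fin.ext ?_)
  rw [← relPos_eq_symm_apply, ← relPos_eq_symm_apply, h.relPos_eq le_rfl j.isLt]

theorem code_lt (π : Equiv.Perm (Fin n)) (i : Fin n) : code π i < i.1 + 1 := by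
  have := relPos_self_add_code π i
  omega

noncomputable def codeEquiv : Equiv.Perm (Fin n) ≃ ∀ i : Fin n, Fin (i.1 + 1) :=
  Equiv.ofBijective (fun π i => ⟨code π i, code_lt π i⟩) <| by
    rw [Fintype.bijective_iff_injective_and_card]
    refine ⟨fun π σ h => (sameOrderBelow_of_code_eq fun j _ => ?_).eq, ?_⟩
    · exact congrArg Fin.val (congrFun h j)
    · simp [Fintype.card_perm, Fin.prod_univ_eq_prod_range (· + 1) n,
        prod_range_add_one_eq_factorial]

theorem code_codeEquiv_symm (v : ∀ i : Fin n, Fin (i.1 + 1)) (i : Fin n) :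
    code (codeEquiv.symm v) i = v i :=
  congrArg Fin.val (congrFun (codeEquiv.apply_symm_apply v) i)

theorem dKT_one_eq_sum_code (π : Equiv.Perm (Fin n)) : dKT π 1 = ∑ i, code π i := by
  rw [dKT, card_filter, Fintype.sum_prod_type_right]
  refine sum_congr rfl fun i _ => ?_
  rw [code, card_filter]
  refine sum_congr rfl fun j _ => if_congr ?_ rfl rfl
  simp only [Equiv.Perm.one_def, Equiv.refl_symm, Equiv.refl_apply]
  refine and_congr_right fun hji => ?_
  rw [symm_lt_symm_iff_not_lt π hji.ne]
  simp [hji]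

theorem gap_succ (π : Equiv.Perm (Fin n)) (a b l : Fin n) :
    gap π (l + 1) a b = gap π l a b + if Between π a b l then 1 else 0 := by
  unfold gap
  split_ifs with hl
  · have hins : (univ.filter fun l' : Fin n => l'.1 < l + 1 ∧ Between π a b l') =
        insert l (univ.filter fun l' : Fin n => l'.1 < l ∧ Between π a b l') := by
      ext l'
      simp only [mem_filter, mem_insert, mem_univ, true_and]
      grind [Fin.ext_iff]
    rw [hins, card_insert_of_notMem (by simp)]
  · rw [add_zero]
    congr 1
    ext l'
    simp only [mem_filter, mem_univ, true_and]
    grind [Fin.ext_iff]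

theorem relPos_eq_add_gap {π : Equiv.Perm (Fin n)} {a b : Fin n} {m : ℕ} (ha : a.1 < m)
    (hab : π.symm a < π.symm b) : relPos π m b = relPos π m a + 1 + gap π m a b := by
  have hsplit := card_filter_add_card_filter_not (s := {l | l.1 < m ∧ π.symm l < π.symm b})
    (fun l => π.symm l ≤ π.symm a)
  have hle : ({l | l.1 < m ∧ π.symm l < π.symm b} : Finset (Fin n)).filter
      (fun l => π.symm l ≤ π.symm a) =
        insert a (univ.filter fun l : Fin n => l.1 < m ∧ π.symm l < π.symm a) := by
    ext l
    simp only [mem_filter, mem_insert, mem_univ, true_and]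
    constructor
    · rintro ⟨⟨hl, -⟩, hla⟩
      rcases hla.lt_or_eq with hla | hla
      · exact Or.inr ⟨hl, hla⟩
      · exact Or.inl (π.symm.injective hla)
    · rintro (rfl | ⟨hl, hla⟩)
      · exact ⟨⟨ha, hab⟩, le_rfl⟩
      · exact ⟨⟨hl, hla.trans hab⟩, hla.le⟩
  have hnle : ({l | l.1 < m ∧ π.symm l < π.symm b} : Finset (Fin n)).filter
      (fun l => ¬π.symm l ≤ π.symm a) =
        univ.filter fun l : Fin n => l.1 < m ∧ Between π a b l := by
    ext l
    simp only [mem_filter, mem_univ, true_and, not_le]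
    unfold Between
    tauto
  rw [hle, hnle, card_insert_of_notMem (by simp)] at hsplit
  rw [relPos, relPos, gap]
  omega

noncomputable def withCode (i : Fin n) (r : ∀ j : {j : Fin n // j ≠ i}, Fin (j.1.1 + 1))
    (c : Fin (i.1 + 1)) : Equiv.Perm (Fin n) :=
  codeEquiv.symm ((Equiv.piSplitAt i fun j : Fin n => Fin (j.1 + 1)).symm (c, r))

theorem sum_perm_eq_sum_withCode {M : Type*} [AddCommMonoid M] (i : Fin n)
    (F : Equiv.Perm (Fin n) → M) : ∑ π, F π = ∑ r, ∑ c, F (withCode i r c) := by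
  rw [← codeEquiv.symm.sum_comp, ← (Equiv.piSplitAt i _).symm.sum_comp,
    Fintype.sum_prod_type_right]
  rfl

variable {i : Fin n} {r : ∀ j : {j : Fin n // j ≠ i}, Fin (j.1.1 + 1)}

theorem code_withCode_self (c : Fin (i.1 + 1)) : code (withCode i r c) i = c := by
  simp [withCode, code_codeEquiv_symm]

theorem code_withCode_of_ne (c : Fin (i.1 + 1)) {j : Fin n} (hj : j ≠ i) :
    code (withCode i r c) j = r ⟨j, hj⟩ := by
  simp [withCode, code_codeEquiv_symm, hj]

theorem sameOrderBelow_withCode (c c' : Fin (i.1 + 1)) :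
    SameOrderBelow i (withCode i r c) (withCode i r c') :=
  sameOrderBelow_of_code_eq fun j hj => by
    have hji : j ≠ i := Fin.ne_of_val_ne hj.ne
    rw [code_withCode_of_ne c hji, code_withCode_of_ne c' hji]

theorem dKT_withCode (c : Fin (i.1 + 1)) :
    dKT (withCode i r c) 1 = c + ∑ j, (r j : ℕ) := by
  rw [dKT_one_eq_sum_code, Fintype.sum_eq_add_sum_subtype_ne _ i, code_withCode_self]
  exact congrArg _ (sum_congr rfl fun j _ => code_withCode_of_ne c j.2)

end Combinatorics

section Weights

variable {n : ℕ}

theorem dKT_self (π : Equiv.Perm (Fin n)) : dKT π π = 0 := by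
  simp [dKT]

noncomputable def wSum (φ : ℝ) (π₀ : Equiv.Perm (Fin n)) (A : Equiv.Perm (Fin n) → Prop)
    (f : Equiv.Perm (Fin n) → ℝ) : ℝ :=
  ∑ π, if A π then φ ^ dKT π π₀ * f π else 0

theorem mCondExp_eq_div {φ : ℝ} (hφ : 0 ≤ φ) (π₀ : Equiv.Perm (Fin n))
    (f : Equiv.Perm (Fin n) → ℝ) (A : Equiv.Perm (Fin n) → Prop) :
    mCondExp φ π₀ f A = wSum φ π₀ A f / wSum φ π₀ A 1 := by
  have hZ : (∑ σ : Equiv.Perm (Fin n), φ ^ dKT σ π₀) ≠ 0 := by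
    refine (lt_of_lt_of_le one_pos ?_).ne'
    simpa [dKT_self] using single_le_sum (f := fun σ => φ ^ dKT σ π₀)
      (fun σ _ => pow_nonneg hφ (dKT σ π₀)) (mem_univ π₀)
  have hnormalise (g : Equiv.Perm (Fin n) → ℝ) :
      (∑ π, if A π then mallowsPMF φ π₀ π * g π else 0) =
        wSum φ π₀ A g / ∑ σ, φ ^ dKT σ π₀ := by
    rw [wSum, sum_div]
    exact sum_congr rfl fun π _ => by split_ifs <;> simp [mallowsPMF, div_mul_eq_mul_div]
  have hmass : mProb φ π₀ A = wSum φ π₀ A 1 / ∑ σ, φ ^ dKT σ π₀ := by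
    simpa [mProb] using hnormalise 1
  rw [mCondExp, hmass, hnormalise, div_div_div_cancel_right₀ hZ]

theorem wSum_congr {φ : ℝ} {π₀ : Equiv.Perm (Fin n)} {A : Equiv.Perm (Fin n) → Prop}
    {f g : Equiv.Perm (Fin n) → ℝ} (h : ∀ π, A π → f π = g π) :
    wSum φ π₀ A f = wSum φ π₀ A g := by
  refine sum_congr rfl fun π _ => ?_
  split_ifs with hA
  · rw [h π hA]
  · rfl

theorem wSum_nonneg {φ : ℝ} (hφ : 0 ≤ φ) (π₀ : Equiv.Perm (Fin n))
    (A : Equiv.Perm (Fin n) → Prop) {f : Equiv.Perm (Fin n) → ℝ} (hf : ∀ π, 0 ≤ f π) :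
    0 ≤ wSum φ π₀ A f :=
  sum_nonneg fun π _ => by
    split_ifs
    · exact mul_nonneg (by positivity) (hf π)
    · rfl

theorem wSum_add (φ : ℝ) (π₀ : Equiv.Perm (Fin n)) (A : Equiv.Perm (Fin n) → Prop)
    (f g : Equiv.Perm (Fin n) → ℝ) :
    wSum φ π₀ A (fun π => f π + g π) = wSum φ π₀ A f + wSum φ π₀ A g := by
  rw [wSum, wSum, wSum, ← sum_add_distrib]
  exact sum_congr rfl fun π _ => by split_ifs <;> ring

theorem wSum_indicator (φ : ℝ) (π₀ : Equiv.Perm (Fin n)) (A B : Equiv.Perm (Fin n) → Prop) :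
    wSum φ π₀ A (fun π => if B π then 1 else 0) = wSum φ π₀ (fun π => A π ∧ B π) 1 :=
  sum_congr rfl fun π _ => by split_ifs <;> simp_all

/-- Fixing the codes of all elements but `i` fixes the order below `i`; the code `c` of `i`
then has weight `φ ^ c` on `c ≤ i`, and only `1 + gap` of these values put `i` between
`x` and `y`. -/
theorem wSum_between_mul_le {φ : ℝ} (hφ0 : 0 ≤ φ) (hφ1 : φ ≤ 1)
    {E : Equiv.Perm (Fin n) → Prop} {i x y : Fin n} (hx : x < i) (hy : y < i)
    (hE : ∀ π σ, SameOrderBelow i π σ → E π → E σ) (hxy : ∀ π, E π → π.symm x < π.symm y) :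
    wSum φ 1 (fun π => E π ∧ Between π x y i) 1 * ∑ c ∈ range (i + 1), φ ^ c ≤
      wSum φ 1 E (fun π => 1 + gap π i x y) := by
  simp only [wSum]
  rw [sum_perm_eq_sum_withCode i, sum_perm_eq_sum_withCode i, sum_mul]
  refine sum_le_sum fun r _ => ?_
  by_cases hE0 : E (withCode i r 0)
  swap
  · have hEc : ∀ c, ¬E (withCode i r c) := fun c hc =>
      hE0 (hE _ _ (sameOrderBelow_withCode c 0) hc)
    simp [hEc]
  have hEc : ∀ c, E (withCode i r c) := fun c => hE _ _ (sameOrderBelow_withCode 0 c) hE0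
  set ρ := withCode i r 0
  set W := φ ^ ∑ j, (r j : ℕ)
  have hgap := relPos_eq_add_gap hx (hxy _ hE0)
  have hB : ∀ c, Between (withCode i r c) x y i ↔
      i - relPos ρ i y ≤ c.1 ∧ c.1 < i - relPos ρ i x := by
    intro c
    have hc : SameOrderBelow i (withCode i r c) ρ := sameOrderBelow_withCode c 0
    rw [between_iff_code _ hx hy, code_withCode_self, hc.relPos_eq le_rfl hx,
      hc.relPos_eq le_rfl hy]
    omega
  have hg (c) : gap (withCode i r c) i x y = gap ρ i x y :=
    (sameOrderBelow_withCode c 0).gap_eq hx hy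
  simp only [hEc, hB, hg, true_and, dKT_withCode, pow_add, Pi.one_apply, mul_one]
  rw [← Fin.sum_univ_eq_sum_range]
  calc (∑ c : Fin (i + 1), if i - relPos ρ i y ≤ c.1 ∧ c.1 < i - relPos ρ i x
        then φ ^ (c : ℕ) * W else 0) * ∑ c : Fin (i + 1), φ ^ (c : ℕ)
      = W * (∑ c : Fin (i + 1), if i - relPos ρ i y ≤ c.1 ∧ c.1 < i - relPos ρ i x
        then φ ^ (c : ℕ) else 0) * ∑ c : Fin (i + 1), φ ^ (c : ℕ) := by
        congr 1
        rw [mul_sum]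
        exact sum_congr rfl fun c _ => by split_ifs <;> ring
    _ ≤ W * (1 + gap ρ i x y) * ∑ c : Fin (i + 1), φ ^ (c : ℕ) := by
        gcongr
        refine (sum_ite_pow_le hφ0 hφ1 _ _ _).trans ?_
        exact_mod_cast (by omega : i - relPos ρ i x - (i - relPos ρ i y) ≤ 1 + gap ρ i x y)
    _ = ∑ c : Fin (i + 1), φ ^ (c : ℕ) * W * (1 + gap ρ i x y) := by
        rw [mul_sum]; refine sum_congr rfl fun c _ => ?_; ring

theorem wSum_gap_add_le_pow {φ : ℝ} (hφ0 : 0 ≤ φ) (hφ1 : φ ≤ 1) {t k : ℕ} (hkn : t + k ≤ n)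
    {E : Equiv.Perm (Fin n) → Prop} {x y : Fin n} (hx : x.1 < t) (hy : y.1 < t)
    (hE : ∀ π σ, SameOrderBelow t π σ → E π → E σ) (hxy : ∀ π, E π → π.symm x < π.symm y) :
    wSum φ 1 E (fun π => gap π (t + k) x y) + wSum φ 1 E 1 ≤
      (1 + (∑ s ∈ range t, φ ^ s)⁻¹) ^ k *
        (wSum φ 1 E (fun π => gap π t x y) + wSum φ 1 E 1) := by
  have hZ : 0 < ∑ s ∈ range t, φ ^ s :=
    sum_pos' (fun s _ => by positivity) ⟨0, mem_range.mpr (by omega), by simp⟩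
  refine (le_geom (u := fun j => wSum φ 1 E (fun π => gap π (t + j) x y) + wSum φ 1 E 1)
    (c := 1 + (∑ s ∈ range t, φ ^ s)⁻¹) (by positivity) k fun j hj => ?_).trans_eq
    (by simp only [add_zero])
  set i : Fin n := ⟨t + j, by omega⟩
  have hsucc : wSum φ 1 E (fun π => gap π (t + (j + 1)) x y) =
      wSum φ 1 E (fun π => gap π (t + j) x y) + wSum φ 1 (fun π => E π ∧ Between π x y i) 1 := by
    rw [← wSum_indicator, ← wSum_add]
    refine wSum_congr fun π _ => ?_
    rw [show t + (j + 1) = i + 1 by simp [i]; omega, gap_succ]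
    push_cast
    rfl
  have hbetween : wSum φ 1 (fun π => E π ∧ Between π x y i) 1 * ∑ c ∈ range (t + j + 1), φ ^ c ≤
      wSum φ 1 E (fun π => 1 + (gap π (t + j) x y : ℝ)) :=
    wSum_between_mul_le hφ0 hφ1 (show x.1 < t + j by omega) (show y.1 < t + j by omega)
      (fun π σ h => hE π σ (h.mono (by simp [i]))) hxy
  have hZle : ∑ s ∈ range t, φ ^ s ≤ ∑ c ∈ range (t + j + 1), φ ^ c :=
    sum_le_sum_of_subset_of_nonneg (range_subset_range.mpr (by omega)) fun _ _ _ => by positivity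
  have hM := wSum_nonneg hφ0 1 (fun π => E π ∧ Between π x y i) (f := 1) fun _ => zero_le_one
  have hMle : wSum φ 1 (fun π => E π ∧ Between π x y i) 1 ≤ (∑ s ∈ range t, φ ^ s)⁻¹ *
      (wSum φ 1 E 1 + wSum φ 1 E (fun π => gap π (t + j) x y)) := by
    rw [le_inv_mul_iff₀ hZ, ← wSum_add]
    exact (mul_comm _ _).trans_le ((mul_le_mul_of_nonneg_left hZle hM).trans hbetween)
  simp only [hsucc]
  linarith

theorem wSum_gap_le {φ : ℝ} (hφ0 : 0 ≤ φ) (hφ1 : φ < 1) {t k : ℕ} (hkt : k ≤ t)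
    (hkφ : (k : ℝ) ≤ 1 / (1 - φ)) (hkn : t + k ≤ n) {E : Equiv.Perm (Fin n) → Prop}
    {x y : Fin n} (hx : x.1 < t) (hy : y.1 < t) (hE : ∀ π σ, SameOrderBelow t π σ → E π → E σ)
    (hxy : ∀ π, E π → relPos π t y = relPos π t x + 1) :
    wSum φ 1 E (fun π => gap π (t + k) x y) ≤
      2 * Real.exp 2 * k * max (1 / (t : ℝ)) (1 - φ) * wSum φ 1 E 1 := by
  have hlt (π) (hπ : E π) := symm_lt_symm_of_relPos_eq_add_one hx (hxy π hπ)
  have hstart : wSum φ 1 E (fun π => gap π t x y) = 0 := by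
    rw [wSum_congr (g := fun _ => 0) fun π hπ => ?_]
    · simp [wSum]
    have := relPos_eq_add_gap hx (hlt π hπ)
    have := hxy π hπ
    simp only [Nat.cast_eq_zero]
    omega
  have hrec := wSum_gap_add_le_pow hφ0 hφ1.le hkn hx hy hE hlt
  rw [hstart, zero_add] at hrec
  have hD := wSum_nonneg hφ0 1 E (f := 1) fun _ => zero_le_one
  have hpow := one_add_inv_geom_sum_pow_sub_one_le hφ0 hφ1 (by omega) hkt hkφ
  nlinarith [mul_le_mul_of_nonneg_right hpow hD]

end Weights

/-- Expected number of in-between insertions. There is a universal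
constant `C` such that, conditioned on the permutation induced by `π ~ M(φ, id)` on the
first `t` elements being `τ`, in which `x` and `y` are consecutive, the expected number of
elements among the next `k` lying strictly between `x` and `y` in the permutation induced
on the first `t + k` elements is at most `C k max(1/t, 1 - φ)`. -/
theorem expected_gaps :
    ∃ C : ℝ, 0 < C ∧
      ∀ (n : ℕ) (φ : ℝ), 0 ≤ φ → φ < 1 →
        ∀ (t k : ℕ), 2 ≤ t → 1 ≤ k → k ≤ t → (k : ℝ) ≤ 1 / (1 - φ) →
          ∀ hn : t + k ≤ n,
            ∀ (τ : Equiv.Perm (Fin t)) (x y : Fin t),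
              (τ.symm y).1 = (τ.symm x).1 + 1 →
              mCondExp φ 1
                  (fun π : Equiv.Perm (Fin n) =>
                    ((relPos π (t + k) ⟨y.1, by have := y.isLt; omega⟩ : ℝ) -
                      (relPos π (t + k) ⟨x.1, by have := x.isLt; omega⟩ : ℝ)) - 1)
                  (fun π : Equiv.Perm (Fin n) =>
                    ∀ j : Fin t, relPos π t ⟨j.1, by have := j.isLt; omega⟩ = (τ.symm j).1) ≤
                C * (k : ℝ) * max (1 / (t : ℝ)) (1 - φ) := by
  refine ⟨2 * Real.exp 2, by positivity, fun n φ hφ0 hφ1 t k ht hk hkt hkφ hn τ x y hxy => ?_⟩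
  set x' : Fin n := ⟨x.1, by omega⟩
  set y' : Fin n := ⟨y.1, by omega⟩
  set A : Equiv.Perm (Fin n) → Prop :=
    fun π => ∀ j : Fin t, relPos π t ⟨j.1, by omega⟩ = (τ.symm j).1
  have hsucc (π) (hπ : A π) : relPos π t y' = relPos π t x' + 1 := by
    have hx : relPos π t x' = _ := hπ x
    have hy : relPos π t y' = _ := hπ y
    omega
  have hE (π σ) (h : SameOrderBelow t π σ) (hπ : A π) : A σ := fun j =>
    (h.relPos_eq le_rfl j.isLt).symm.trans (hπ j)
  rw [mCondExp_eq_div hφ0, wSum_congr (g := fun π => gap π (t + k) x' y') fun π hπ => ?_]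
  · refine div_le_of_le_mul₀ (wSum_nonneg hφ0 1 A fun _ => zero_le_one) (by positivity) ?_
    exact wSum_gap_le hφ0 hφ1 hkt hkφ hn x.isLt y.isLt hE hsucc
  have := relPos_eq_add_gap (show x'.1 < t + k by simp [x']; omega)
    (symm_lt_symm_of_relPos_eq_add_one x.isLt (hsucc π hπ))
  push_cast [this]
  ring

end Mallows
end
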